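/- arXiv:math/0212078 — 3 statements merged into one kernel-verified Lean document; each statement's English description precedes it below -/
import Mathlib

section
/- Let H be a complex Hilbert space and A a positive trace-class operator on H with trace 1 (a state). For a unit vector φ ∈ H with associated rank-one projection P_φ, the strength λ(A, P_φ) := sup { λ ∈ [0,1] : λ·P_φ ≤ A } satisfies λ(A, P_φ) = 0 if and only if φ ∉ range(A^{1/2}). -/
open scoped InnerProductSpace

variable {H : Type*} [NormedAddCommGroup H] [InnerProductSpace ℂ H] [CompleteSpace H]

/-- The trace of `A` is one: in every Hilbert basis, the diagonal sums to `1`. -/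
def HasTraceOne (A : H →L[ℂ] H) : Prop :=
  ∀ (w : Set H) (b : HilbertBasis w ℂ H),
    HasSum (fun i => RCLike.re (⟪(b i : H), A (b i)⟫_ℂ)) 1

/-- A state: a positive (trace-class) operator of trace one. -/
def IsState (A : H →L[ℂ] H) : Prop := A.IsPositive ∧ HasTraceOne A

/-- A rank-one orthogonal projection (pure state). -/
def IsRankOneProjection (P : H →L[ℂ] H) : Prop :=
  IsIdempotentElem P ∧ IsSelfAdjoint P ∧ Module.finrank ℂ (LinearMap.range (P : H →ₗ[ℂ] H)) = 1

/-- The strength of the effect `T` along `P`: `sup { t ∈ [0,1] : t • P ≤ T }`. -/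
noncomputable def strength (T P : H →L[ℂ] H) : ℝ :=
  sSup {t : ℝ | t ∈ Set.Icc (0:ℝ) 1 ∧ t • P ≤ T}

/-- The positive square root of a positive operator. -/
noncomputable def opSqrt (A : H →L[ℂ] H) : H →L[ℂ] H := CFC.sqrt A

/-!
With `S = A^{1/2}`, the inequality `t • P_φ ≤ A` says `t ‖⟪φ, x⟫‖² ≤ ‖S x‖²` for all `x`, and the
strength vanishes exactly when this fails for every `t > 0`. By the rank-one case of Douglas'
lemma such a bound holds iff `φ ∈ range S`: the functional `S x ↦ ⟪φ, x⟫` is then bounded on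
`range S`, extends by Hahn–Banach, and its Riesz representative `ψ` satisfies `S ψ = φ`.
-/

open ContinuousLinearMap InnerProductSpace RCLike
open scoped InnerProduct

section

variable {𝕜 E F : Type*} [RCLike 𝕜]

theorem LinearMap.exists_continuousLinearMap_apply_eq_of_norm_le
    [AddCommGroup E] [Module 𝕜 E] [NormedAddCommGroup F] [NormedSpace 𝕜 F]
    (f : E →ₗ[𝕜] F) (g : E →ₗ[𝕜] 𝕜) (C : ℝ) (hfg : ∀ x, ‖g x‖ ≤ C * ‖f x‖) :
    ∃ h : StrongDual 𝕜 F, ∀ x, h (f x) = g x := by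
  have hker : LinearMap.ker f ≤ LinearMap.ker g := fun x hx => by
    simpa [show f x = 0 from hx] using hfg x
  set g₀ : LinearMap.range f →ₗ[𝕜] 𝕜 :=
    (LinearMap.ker f).liftQ g hker ∘ₗ f.quotKerEquivRange.symm.toLinearMap
  have hg₀ : ∀ x, g₀ ⟨f x, LinearMap.mem_range_self f x⟩ = g x := fun x => by
    simp [g₀, LinearMap.quotKerEquivRange_symm_apply_image]
  have hbound : ∀ y, ‖g₀ y‖ ≤ C * ‖y‖ := by
    rintro ⟨_, x, rfl⟩
    rw [hg₀]
    exact hfg x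
  obtain ⟨h, hh, -⟩ := exists_extension_norm_eq _ (g₀.mkContinuous C hbound)
  exact ⟨h, fun x => (hh ⟨f x, LinearMap.mem_range_self f x⟩).trans (hg₀ x)⟩

variable [NormedAddCommGroup E] [InnerProductSpace 𝕜 E] [CompleteSpace E]
  [NormedAddCommGroup F] [InnerProductSpace 𝕜 F] [CompleteSpace F]

theorem ContinuousLinearMap.mem_range_iff_exists_mul_norm_inner_le (S : F →L[𝕜] E) (φ : E) :
    φ ∈ Set.range S ↔ ∃ c > 0, ∀ x, c * ‖⟪φ, x⟫_𝕜‖ ≤ ‖(S†) x‖ := by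
  constructor
  · rintro ⟨ψ, rfl⟩
    refine ⟨(‖ψ‖ + 1)⁻¹, by positivity, fun x => ?_⟩
    rw [← adjoint_inner_right, inv_mul_le_iff₀ (by positivity)]
    calc ‖⟪ψ, (S†) x⟫_𝕜‖ ≤ ‖ψ‖ * ‖(S†) x‖ := norm_inner_le_norm _ _
      _ ≤ (‖ψ‖ + 1) * ‖(S†) x‖ := by gcongr; linarith
  · rintro ⟨c, hc, h⟩
    obtain ⟨g, hg⟩ := (S† : E →ₗ[𝕜] F).exists_continuousLinearMap_apply_eq_of_norm_le
      (innerₛₗ 𝕜 φ) c⁻¹ fun x => by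
        rw [le_inv_mul_iff₀ hc]
        exact h x
    refine ⟨(toDual 𝕜 F).symm g, ext_inner_right 𝕜 fun x => ?_⟩
    rw [← adjoint_inner_right, toDual_symm_apply]
    exact hg x

theorem ContinuousLinearMap.le_iff_re_inner_le {T U : E →L[𝕜] E} (hT : IsSelfAdjoint T)
    (hU : IsSelfAdjoint U) : T ≤ U ↔ ∀ x, re ⟪T x, x⟫_𝕜 ≤ re ⟪U x, x⟫_𝕜 := by
  simp [le_def, isPositive_def', hU.sub hT, reApplyInnerSelf_apply, inner_sub_left]

theorem IsStarProjection.eq_rankOne_of_range_eq_span_singleton {P : E →L[𝕜] E}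
    (hP : IsStarProjection P) {φ : E} (hφ : ‖φ‖ = 1)
    (hPφ : LinearMap.range (P : E →ₗ[𝕜] E) = 𝕜 ∙ φ) : P = rankOne 𝕜 φ φ := by
  obtain ⟨_, hPeq⟩ := isStarProjection_iff_eq_starProjection_range.mp hP
  -- generalizing `K` lets `rfl` transport the `HasOrthogonalProjection` instance
  have key : ∀ (K : Submodule 𝕜 E) [K.HasOrthogonalProjection], K = 𝕜 ∙ φ →
      K.starProjection = rankOne 𝕜 φ φ := by
    rintro K _ rfl
    ext x
    exact Submodule.starProjection_unit_singleton 𝕜 hφ x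
  exact hPeq.trans (key _ hPφ)

end

theorem smul_rankOne_self_le_iff {A : H →L[ℂ] H} (hA : IsSelfAdjoint A) (t : ℝ) (φ : H) :
    t • rankOne ℂ φ φ ≤ A ↔ ∀ x, t * ‖⟪φ, x⟫_ℂ‖ ^ 2 ≤ re ⟪A x, x⟫_ℂ := by
  have hR : IsSelfAdjoint (t • rankOne ℂ φ φ) :=
    .smul (.all t) (isPositive_rankOne_self φ).isSelfAdjoint
  have hRx : ∀ x, re ⟪(t • rankOne ℂ φ φ) x, x⟫_ℂ = t * ‖⟪φ, x⟫_ℂ‖ ^ 2 := fun x => by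
    simp only [smul_apply, rankOne_apply, RCLike.real_smul_eq_coe_smul (K := ℂ), inner_smul_left,
      RCLike.conj_ofReal, RCLike.conj_mul]
    norm_cast
  simp only [le_iff_re_inner_le hR hA, hRx]

theorem isPositive_opSqrt {A : H →L[ℂ] H} : (opSqrt A).IsPositive :=
  (nonneg_iff_isPositive _).mp (CFC.sqrt_nonneg A)

theorem re_inner_apply_self_eq_norm_opSqrt_apply_sq {A : H →L[ℂ] H} (hA : 0 ≤ A) (x : H) :
    re ⟪A x, x⟫_ℂ = ‖opSqrt A x‖ ^ 2 := by
  rw [← inner_self_eq_norm_sq (𝕜 := ℂ), ← isPositive_opSqrt.inner_left_eq_inner_right]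
  conv_lhs => rw [← CFC.sqrt_mul_sqrt_self A hA]
  rfl

theorem mem_range_opSqrt_iff_exists_smul_rankOne_le {A : H →L[ℂ] H} (hA : 0 ≤ A) (φ : H) :
    φ ∈ Set.range (opSqrt A) ↔ ∃ t > (0 : ℝ), t • rankOne ℂ φ φ ≤ A := by
  simp_rw [mem_range_iff_exists_mul_norm_inner_le, isPositive_opSqrt.isSelfAdjoint.adjoint_eq,
    smul_rankOne_self_le_iff hA.isSelfAdjoint, re_inner_apply_self_eq_norm_opSqrt_apply_sq hA]
  constructor
  · rintro ⟨c, hc, h⟩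
    refine ⟨c ^ 2, by positivity, fun x => ?_⟩
    simpa [mul_pow] using pow_le_pow_left₀ (by positivity) (h x) 2
  · rintro ⟨t, ht, h⟩
    refine ⟨√t, by positivity, fun x => ?_⟩
    rw [← pow_le_pow_iff_left₀ (by positivity) (norm_nonneg _) two_ne_zero, mul_pow,
      Real.sq_sqrt ht.le]
    exact h x

theorem strength_eq_zero_iff {T P : H →L[ℂ] H} (hT : 0 ≤ T) (hP : 0 ≤ P) :
    strength T P = 0 ↔ ¬ ∃ t > (0 : ℝ), t • P ≤ T := by
  unfold strength
  set s := {t : ℝ | t ∈ Set.Icc (0 : ℝ) 1 ∧ t • P ≤ T}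
  have h0 : (0 : ℝ) ∈ s := ⟨⟨le_rfl, zero_le_one⟩, by simpa using hT⟩
  have hbdd : BddAbove s := ⟨1, fun t ht => ht.1.2⟩
  constructor
  · rintro h ⟨t, ht, htP⟩
    have hmin : min t 1 ∈ s := ⟨⟨by positivity, min_le_right _ _⟩,
      (smul_le_smul_of_nonneg_right (min_le_left t 1) hP).trans htP⟩
    linarith [le_csSup hbdd hmin, lt_min ht one_pos]
  · intro h
    exact le_antisymm (csSup_le ⟨0, h0⟩ fun t ht => not_lt.mp fun htpos => h ⟨t, htpos, ht.2⟩)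
      (le_csSup hbdd h0)

theorem strength_eq_zero_iff_not_mem_range_sqrt
    (A : H →L[ℂ] H) (hA : IsState A) (φ : H) (hφ : ‖φ‖ = 1)
    (P : H →L[ℂ] H) (hP : IsRankOneProjection P)
    (hPφ : LinearMap.range (P : H →ₗ[ℂ] H) = Submodule.span ℂ {φ}) :
    strength A P = 0 ↔ φ ∉ Set.range (opSqrt A) := by
  have hA₀ : 0 ≤ A := (nonneg_iff_isPositive A).mpr hA.1
  obtain rfl : P = rankOne ℂ φ φ :=
    IsStarProjection.eq_rankOne_of_range_eq_span_singleton ⟨hP.1, hP.2.1⟩ hφ hPφ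
  rw [strength_eq_zero_iff hA₀ ((nonneg_iff_isPositive _).mpr (isPositive_rankOne_self φ)),
    mem_range_opSqrt_iff_exists_smul_rankOne_le hA₀]
end

section
/- Let P, Q be rank-one orthogonal projections on a complex Hilbert space H with PQ = 0, let 0 < λ < μ < 1 with λ + μ = 1, and set A = λP + μQ. Then for every rank-one projection R with range contained in range(A), the strength satisfies λ ≤ λ(A,R) ≤ μ, where λ(A,R) = sup { t ∈ [0,1] : t·R ≤ A }. -/
/-!
`E = P + Q` is a projection (as `P Q = 0`) with `E A = A`, and `l • E ≤ A ≤ m • E` since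
`A - l • E = (m - l) • Q` and `m • E - A = (m - l) • P`. The range of `R` lies in that of `A`,
hence in that of `E`, so `R ≤ E` and `l • R ≤ A`. Conversely, if `t • R ≤ A` then
`t • R ≤ m • E ≤ m • 1`; compressing by `R` gives `0 ≤ (m - t) • R`, forcing `t ≤ m` as `R ≠ 0`.
-/

open scoped InnerProductSpace

variable {H : Type*} [NormedAddCommGroup H] [InnerProductSpace ℂ H] [CompleteSpace H]

set_option linter.unusedSectionVars false

section OrderedModule

variable {M : Type*} [AddCommGroup M] [PartialOrder M] [IsOrderedAddMonoid M] [Module ℝ M]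
  [PosSMulMono ℝ M] {p q : M} {l m : ℝ}

lemma smul_add_le_smul_add_smul (hq : 0 ≤ q) (hlm : l ≤ m) : l • (p + q) ≤ l • p + m • q := by
  rw [smul_add, add_le_add_iff_left]
  exact smul_le_smul_of_nonneg_right hlm hq

lemma smul_add_smul_le_smul_add (hp : 0 ≤ p) (hlm : l ≤ m) : l • p + m • q ≤ m • (p + q) := by
  rw [smul_add, add_le_add_iff_right]
  exact smul_le_smul_of_nonneg_right hlm hp

end OrderedModule

namespace IsStarProjection

variable {A : Type*} [Ring A] [StarRing A] [Algebra ℝ A] {p q r : A}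

lemma add_mul_smul_add_smul (hp : IsStarProjection p) (hq : IsStarProjection q) (hpq : p * q = 0)
    (a b : ℝ) : (p + q) * (a • p + b • q) = a • p + b • q := by
  have hqp : q * p = 0 := by
    simpa [hp.isSelfAdjoint.star_eq, hq.isSelfAdjoint.star_eq] using congr(star $(hpq))
  simp only [mul_add, add_mul, mul_smul_comm, hp.isIdempotentElem.eq, hq.isIdempotentElem.eq,
    hpq, hqp, add_zero, zero_add]

variable [PartialOrder A] [StarOrderedRing A] [StarModule ℝ A]

lemma le_of_smul_le_smul_one (hr : IsStarProjection r) (hr0 : r ≠ 0) {t m : ℝ}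
    (h : t • r ≤ m • 1) : t ≤ m := by
  have hcompress : r * (m • 1 - t • r) * r = (m - t) • r := by
    simp only [mul_sub, sub_mul, mul_smul_comm, smul_mul_assoc, mul_one, hr.isIdempotentElem.eq,
      sub_smul]
  have hnonneg : 0 ≤ (m - t) • r := by
    simpa [hr.isSelfAdjoint.star_eq, hcompress] using
      star_left_conjugate_nonneg (sub_nonneg.2 h) r
  by_contra! hmt
  have hzero : (m - t) • r = 0 :=
    le_antisymm (smul_nonpos_of_nonpos_of_nonneg (sub_nonpos.2 hmt.le) hr.nonneg) hnonneg
  exact hr0 ((smul_eq_zero.mp hzero).resolve_left (sub_ne_zero.2 hmt.ne))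

end IsStarProjection

lemma le_strength {T R : H →L[ℂ] H} {t : ℝ} (ht : t ∈ Set.Icc (0 : ℝ) 1) (h : t • R ≤ T) :
    t ≤ strength T R :=
  le_csSup ⟨1, fun _ hs => hs.1.2⟩ ⟨ht, h⟩

lemma strength_le {T R : H →L[ℂ] H} {c : ℝ} (hc : 0 ≤ c)
    (h : ∀ t ∈ Set.Icc (0 : ℝ) 1, t • R ≤ T → t ≤ c) : strength T R ≤ c :=
  Real.sSup_le (fun t ht => h t ht.1 ht.2) hc

lemma ContinuousLinearMap.mul_eq_right_of_range_le {S E : Type*} [Semiring S] [TopologicalSpace E]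
    [AddCommMonoid E] [Module S E] {e a r : E →L[S] E} (he : IsIdempotentElem e) (hea : e * a = a)
    (hra : LinearMap.range (r : E →ₗ[S] E) ≤ LinearMap.range (a : E →ₗ[S] E)) : e * r = r := by
  have hrange := LinearMap.IsIdempotentElem.comp_eq_right_iff (E := E)
    (ContinuousLinearMap.IsIdempotentElem.toLinearMap he)
  have hae : LinearMap.range (a : E →ₗ[S] E) ≤ LinearMap.range (e : E →ₗ[S] E) :=
    (hrange _).mp congr(($hea : E →ₗ[S] E))
  exact ContinuousLinearMap.coe_inj.mp ((hrange _).mpr (hra.trans hae))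

namespace IsRankOneProjection

lemma isStarProjection {P : H →L[ℂ] H} (hP : IsRankOneProjection P) : IsStarProjection P :=
  ⟨hP.1, hP.2.1⟩

lemma ne_zero {P : H →L[ℂ] H} (hP : IsRankOneProjection P) : P ≠ 0 := by
  rintro rfl
  have h := hP.2.2
  rw [ContinuousLinearMap.toLinearMap_zero, LinearMap.range_zero, finrank_bot] at h
  exact zero_ne_one h

end IsRankOneProjection

theorem strength_between_general (P Q : H →L[ℂ] H)
    (hP : IsRankOneProjection P) (hQ : IsRankOneProjection Q) (hPQ : P ∘L Q = 0)
    (l m : ℝ) (hl : 0 < l) (hlm : l < m) (hm : m < 1)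
    (A : H →L[ℂ] H) (hA : A = l • P + m • Q)
    (R : H →L[ℂ] H) (hR : IsRankOneProjection R)
    (hRA : LinearMap.range (R : H →ₗ[ℂ] H) ≤ LinearMap.range (A : H →ₗ[ℂ] H)) :
    l ≤ strength A R ∧ strength A R ≤ m := by
  have hp := hP.isStarProjection
  have hq := hQ.isStarProjection
  have hr := hR.isStarProjection
  have he : IsStarProjection (P + Q) := hp.add hq hPQ
  have hEA : (P + Q) * A = A := hA ▸ hp.add_mul_smul_add_smul hq hPQ l m
  have hRE : R ≤ P + Q := hr.le_of_mul_eq_right he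
    (ContinuousLinearMap.mul_eq_right_of_range_le he.isIdempotentElem hEA hRA)
  subst hA
  constructor
  · refine le_strength ⟨hl.le, (hlm.trans hm).le⟩ ?_
    calc l • R ≤ l • (P + Q) := smul_le_smul_of_nonneg_left hRE hl.le
      _ ≤ l • P + m • Q := smul_add_le_smul_add_smul hq.nonneg hlm.le
  · refine strength_le (hl.trans hlm).le fun t _ htR => hr.le_of_smul_le_smul_one hR.ne_zero ?_
    calc t • R ≤ l • P + m • Q := htR
      _ ≤ m • (P + Q) := smul_add_smul_le_smul_add hp.nonneg hlm.le
      _ ≤ m • 1 := smul_le_smul_of_nonneg_left he.le_one (hl.trans hlm).le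

theorem strength_between (P Q : H →L[ℂ] H)
    (hP : IsRankOneProjection P) (hQ : IsRankOneProjection Q) (hPQ : P ∘L Q = 0)
    (l m : ℝ) (hl : 0 < l) (hlm : l < m) (hm : m < 1) (hsum : l + m = 1)
    (A : H →L[ℂ] H) (hA : A = l • P + m • Q)
    (R : H →L[ℂ] H) (hR : IsRankOneProjection R)
    (hRA : LinearMap.range (R : H →ₗ[ℂ] H) ≤ LinearMap.range (A : H →ₗ[ℂ] H)) :
    l ≤ strength A R ∧ strength A R ≤ m :=
  strength_between_general P Q hP hQ hPQ l m hl hlm hm A hA R hR hRA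
end

section
/- Let φ : S(H) → S(H) be a bijection of the states of a complex Hilbert space H that preserves compatibility in both directions, i.e., range(A^{1/2}) ∩ range(B^{1/2}) = {0} if and only if range(φ(A)^{1/2}) ∩ range(φ(B)^{1/2}) = {0}. Then φ maps pure states onto pure states, i.e., A is a rank-one projection if and only if φ(A) is. -/
open scoped InnerProductSpace

variable {H : Type*} [NormedAddCommGroup H] [InnerProductSpace ℂ H] [CompleteSpace H]

/-!
A state `A` is determined, as far as compatibility is concerned, by the subspace `range √A`; let
`N(A)` be the set of states `C` with `range √A ⊓ range √C = ⊥`. Every line `ℂ ∙ u` is `range √P`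
for the pure state `P = |u⟩⟨u|`, so testing against pure states shows that `N(A) ⊆ N(B)` exactly
when `range √B ≤ range √A`. Hence `N(A)` is maximal among the sets `N(B)` iff `range √A` is a line,
and for a state this happens iff `A` is a rank-one projection: if `range A ≤ ℂ ∙ u` with `‖u‖ = 1`,
self-adjointness gives `A = t • |u⟩⟨u|`, and trace one forces `t = 1`. Maximality of `N(A)` is
phrased through compatibility alone, so a bijection of the states preserving compatibility in both
directions preserves it.
-/

open InnerProductSpace ContinuousLinearMap Function

section RelatedIn

variable {α β : Type*}

def relatedIn (S : Set α) (R : α → α → Prop) (a : α) : Set α := {c ∈ S | R a c}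

variable {S : Set α} {T : Set β} {R : α → α → Prop} {R' : β → β → Prop} {φ : α → β}

theorem relatedIn_map_subset_map_iff (hmaps : Set.MapsTo φ S T) (hsurj : Set.SurjOn φ S T)
    (hR : ∀ a ∈ S, ∀ b ∈ S, R a b ↔ R' (φ a) (φ b)) {a b : α} (ha : a ∈ S) (hb : b ∈ S) :
    relatedIn T R' (φ a) ⊆ relatedIn T R' (φ b) ↔ relatedIn S R a ⊆ relatedIn S R b := by
  constructor
  · rintro h c ⟨hc, hac⟩
    exact ⟨hc, (hR b hb c hc).2 (h ⟨hmaps hc, (hR a ha c hc).1 hac⟩).2⟩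
  · rintro h c' ⟨hc', hac'⟩
    obtain ⟨c, hc, rfl⟩ := hsurj hc'
    exact ⟨hc', (hR b hb c hc).1 (h ⟨hc, (hR a ha c hc).2 hac'⟩).2⟩

theorem maximal_relatedIn_map_iff (hmaps : Set.MapsTo φ S T) (hsurj : Set.SurjOn φ S T)
    (hR : ∀ a ∈ S, ∀ b ∈ S, R a b ↔ R' (φ a) (φ b)) {a : α} (ha : a ∈ S) :
    Maximal (· ∈ relatedIn T R' '' T) (relatedIn T R' (φ a)) ↔
      Maximal (· ∈ relatedIn S R '' S) (relatedIn S R a) := by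
  simp only [Maximal, Set.forall_mem_image, Set.mem_image_of_mem _ ha,
    Set.mem_image_of_mem _ (hmaps ha), true_and, hsurj.forall hmaps]
  refine forall₂_congr fun b hb => ?_
  rw [relatedIn_map_subset_map_iff hmaps hsurj hR ha hb,
    relatedIn_map_subset_map_iff hmaps hsurj hR hb ha]

end RelatedIn

noncomputable abbrev sqrtRange (A : H →L[ℂ] H) : Submodule ℂ H :=
  LinearMap.range (opSqrt A : H →ₗ[ℂ] H)

theorem IsStarProjection.opSqrt_eq {P : H →L[ℂ] H} (hP : IsStarProjection P) : opSqrt P = P :=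
  CFC.sqrt_unique hP.isIdempotentElem ((nonneg_iff_isPositive P).2 (.of_isStarProjection hP))

theorem hasSum_re_inner_rankOne_self {𝕜 E ι : Type*} [RCLike 𝕜] [NormedAddCommGroup E]
    [InnerProductSpace 𝕜 E] (b : HilbertBasis ι 𝕜 E) (x : E) :
    HasSum (fun i => RCLike.re ⟪b i, rankOne 𝕜 x x (b i)⟫_𝕜) (‖x‖ ^ 2) := by
  have h := (b.hasSum_inner_mul_inner x x).mapL RCLike.reCLM
  simp only [RCLike.reCLM_apply, inner_self_eq_norm_sq] at h
  simpa only [inner_right_rankOne_apply, mul_comm] using h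

theorem hasTraceOne_smul_rankOne_self_iff {u : H} (hu : ‖u‖ = 1) {t : ℝ} :
    HasTraceOne ((t : ℂ) • rankOne ℂ u u) ↔ t = 1 := by
  have hsum : ∀ (w : Set H) (b : HilbertBasis w ℂ H),
      HasSum (fun i => RCLike.re ⟪b i, ((t : ℂ) • rankOne ℂ u u) (b i)⟫_ℂ) t := by
    intro w b
    simpa only [smul_apply, inner_smul_right, RCLike.re_to_complex, Complex.re_ofReal_mul, hu,
      one_pow, mul_one] using (hasSum_re_inner_rankOne_self b u).mul_left t
  refine ⟨fun h => ?_, fun ht w b => ht ▸ hsum w b⟩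
  obtain ⟨w, b, -⟩ := exists_hilbertBasis ℂ H
  exact (hsum w b).unique (h w b)

theorem isState_rankOne_self {u : H} (hu : ‖u‖ = 1) : IsState (rankOne ℂ u u) :=
  ⟨isPositive_rankOne_self u, by
    simpa using (hasTraceOne_smul_rankOne_self_iff hu (t := 1)).2 rfl⟩

theorem range_rankOne {𝕜 E : Type*} [RCLike 𝕜] [NormedAddCommGroup E] [InnerProductSpace 𝕜 E]
    (x : E) {y : E} (hy : y ≠ 0) : LinearMap.range (rankOne 𝕜 x y : E →ₗ[𝕜] E) = 𝕜 ∙ x := by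
  refine range_smulRight_apply (fun h => hy ?_) x
  simpa using congrArg norm h

theorem isRankOneProjection_rankOne_self {u : H} (hu : ‖u‖ = 1) :
    IsRankOneProjection (rankOne ℂ u u) :=
  have hu0 : u ≠ 0 := ne_zero_of_norm_ne_zero (hu ▸ one_ne_zero)
  ⟨isIdempotentElem_rankOne_self hu, (isStarProjection_rankOne_self hu).isSelfAdjoint, by
    rw [range_rankOne u hu0, finrank_span_singleton hu0]⟩

theorem sqrtRange_rankOne_self {u : H} (hu : ‖u‖ = 1) : sqrtRange (rankOne ℂ u u) = ℂ ∙ u := by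
  rw [sqrtRange, (isStarProjection_rankOne_self hu).opSqrt_eq,
    range_rankOne u (ne_zero_of_norm_ne_zero (hu ▸ one_ne_zero))]

theorem IsAtom.exists_norm_eq_one_eq_span {𝕜 E : Type*} [RCLike 𝕜] [NormedAddCommGroup E]
    [InnerProductSpace 𝕜 E] {p : Submodule 𝕜 E} (hp : IsAtom p) :
    ∃ u : E, ‖u‖ = 1 ∧ p = 𝕜 ∙ u := by
  obtain ⟨x, hx, hx0⟩ := (Submodule.ne_bot_iff p).1 hp.1
  have hu := norm_smul_inv_norm (𝕜 := 𝕜) hx0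
  refine ⟨_, hu, ((hp.le_iff.1 ?_).resolve_left ?_).symm⟩
  · exact (Submodule.span_singleton_le_iff_mem _ _).2 (p.smul_mem _ hx)
  · rw [Submodule.span_singleton_eq_bot, ← norm_eq_zero, hu]
    exact one_ne_zero

theorem exists_isState_sqrtRange_eq {p : Submodule ℂ H} (hp : IsAtom p) :
    ∃ B, IsState B ∧ sqrtRange B = p := by
  obtain ⟨u, hu, rfl⟩ := hp.exists_norm_eq_one_eq_span
  exact ⟨rankOne ℂ u u, isState_rankOne_self hu, sqrtRange_rankOne_self hu⟩

namespace IsState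

variable {A : H →L[ℂ] H}

theorem ne_zero (hA : IsState A) : A ≠ 0 := by
  rintro rfl
  obtain ⟨w, b, -⟩ := exists_hilbertBasis ℂ H
  have h := hA.2 w b
  simp only [zero_apply, inner_zero_right, map_zero] at h
  exact one_ne_zero (h.unique hasSum_zero)

theorem opSqrt_mul_self (hA : IsState A) : opSqrt A * opSqrt A = A :=
  CFC.sqrt_mul_sqrt_self A ((nonneg_iff_isPositive A).2 hA.1)

theorem sqrtRange_ne_bot (hA : IsState A) : sqrtRange A ≠ ⊥ := by
  intro h
  rw [LinearMap.range_eq_bot, ← toLinearMap_zero, coe_inj] at h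
  exact hA.ne_zero (by rw [← hA.opSqrt_mul_self, h, zero_mul])

theorem range_le_sqrtRange (hA : IsState A) :
    LinearMap.range (A : H →ₗ[ℂ] H) ≤ sqrtRange A := by
  conv_lhs => rw [← hA.opSqrt_mul_self]
  exact LinearMap.range_comp_le_range _ _

theorem eq_rankOne_of_range_le (hA : IsState A) {u : H} (hu : ‖u‖ = 1)
    (hrange : LinearMap.range (A : H →ₗ[ℂ] H) ≤ ℂ ∙ u) : A = rankOne ℂ u u := by
  have hfix : rankOne ℂ u u * A = A := by
    ext y
    obtain ⟨c, hc⟩ := Submodule.mem_span_singleton.1 (hrange ⟨y, rfl⟩)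
    rw [coe_coe] at hc
    show rankOne ℂ u u (A y) = A y
    rw [rankOne_apply, ← hc, inner_smul_right, inner_self_eq_norm_sq_to_K, hu]
    simp
  have hcomp : A = A * rankOne ℂ u u := by
    simpa only [star_mul, hA.1.isSelfAdjoint.star_eq,
      (isStarProjection_rankOne_self hu).isSelfAdjoint.star_eq] using (congrArg star hfix).symm
  have hAu : A u = ((RCLike.re ⟪A u, u⟫_ℂ : ℝ) : ℂ) • u := by
    have hre := hA.1.isSymmetric.coe_re_inner_apply_self u
    have hsymm := hA.1.isSymmetric u u
    simp only [coe_coe] at hre hsymm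
    conv_lhs => rw [← hfix]
    show rankOne ℂ u u (A u) = _
    rw [rankOne_apply, ← hsymm]
    exact congrArg (· • u) hre.symm
  have hA_eq : A = ((RCLike.re ⟪A u, u⟫_ℂ : ℝ) : ℂ) • rankOne ℂ u u := by
    conv_lhs => rw [hcomp, mul_def, comp_rankOne, hAu, map_smul, smul_apply]
  have htrace := hA.2
  rw [hA_eq, hasTraceOne_smul_rankOne_self_iff hu] at htrace
  rw [hA_eq, htrace, Complex.ofReal_one, one_smul]

theorem isRankOneProjection_iff_isAtom_sqrtRange (hA : IsState A) :
    IsRankOneProjection A ↔ IsAtom (sqrtRange A) := by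
  constructor
  · rintro ⟨hidem, hsa, hrank⟩
    rw [sqrtRange, IsStarProjection.opSqrt_eq ⟨hidem, hsa⟩]
    exact Submodule.isAtom_iff_finrank_eq_one.2 hrank
  · intro hatom
    obtain ⟨u, hu, hline⟩ := hatom.exists_norm_eq_one_eq_span
    rw [hA.eq_rankOne_of_range_le hu (hA.range_le_sqrtRange.trans hline.le)]
    exact isRankOneProjection_rankOne_self hu

end IsState

theorem relatedIn_disjoint_sqrtRange_subset_iff {A B : H →L[ℂ] H} :
    relatedIn {C | IsState C} (Disjoint on sqrtRange) A ⊆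
        relatedIn {C | IsState C} (Disjoint on sqrtRange) B ↔
      sqrtRange B ≤ sqrtRange A := by
  refine ⟨fun h y hyB => ?_, fun h C ⟨hC, hAC⟩ => ⟨hC, hAC.mono_left h⟩⟩
  by_contra hyA
  have hy : y ≠ 0 := fun hy => hyA (hy ▸ zero_mem _)
  obtain ⟨C, hC, hCy⟩ := exists_isState_sqrtRange_eq (nonzero_span_atom y hy)
  have hAC : Disjoint (sqrtRange A) (sqrtRange C) := by
    rwa [hCy, Submodule.disjoint_span_singleton' hy]
  have hBC : Disjoint (sqrtRange B) (sqrtRange C) := (h ⟨hC, hAC⟩).2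
  rw [hCy, Submodule.disjoint_span_singleton' hy] at hBC
  exact hBC hyB

theorem IsState.maximal_relatedIn_iff_isAtom_sqrtRange {A : H →L[ℂ] H} (hA : IsState A) :
    Maximal (· ∈ relatedIn {C | IsState C} (Disjoint on sqrtRange) '' {C | IsState C})
        (relatedIn {C | IsState C} (Disjoint on sqrtRange) A) ↔ IsAtom (sqrtRange A) := by
  simp only [Maximal, Set.forall_mem_image, Set.mem_image_of_mem _ (Set.mem_ofPred.2 hA),
    true_and, relatedIn_disjoint_sqrtRange_subset_iff]
  constructor
  · intro h
    obtain ⟨x, hx, hx0⟩ := (Submodule.ne_bot_iff _).1 hA.sqrtRange_ne_bot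
    obtain ⟨B, hB, hBx⟩ := exists_isState_sqrtRange_eq (nonzero_span_atom x hx0)
    have hxA : ℂ ∙ x ≤ sqrtRange A := (Submodule.span_singleton_le_iff_mem _ _).2 hx
    rw [le_antisymm (hBx ▸ h hB (hBx ▸ hxA)) hxA]
    exact nonzero_span_atom x hx0
  · intro hatom B hB hBA
    exact ((hatom.le_iff.1 hBA).resolve_left hB.sqrtRange_ne_bot).ge

theorem preserver_maps_pure_to_pure_general
    (φ : (H →L[ℂ] H) → (H →L[ℂ] H))
    (hφS : Set.BijOn φ {A | IsState A} {A | IsState A})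
    (hφ : ∀ A B, IsState A → IsState B →
      (LinearMap.range (opSqrt A : H →ₗ[ℂ] H) ⊓ LinearMap.range (opSqrt B : H →ₗ[ℂ] H) = ⊥ ↔
        LinearMap.range (opSqrt (φ A) : H →ₗ[ℂ] H) ⊓ LinearMap.range (opSqrt (φ B) : H →ₗ[ℂ] H) = ⊥)) :
    ∀ A, IsState A → (IsRankOneProjection A ↔ IsRankOneProjection (φ A)) := by
  intro A hA
  have hdisj : ∀ B ∈ {A | IsState A}, ∀ C ∈ {A | IsState A},
      (Disjoint on sqrtRange) B C ↔ (Disjoint on sqrtRange) (φ B) (φ C) := fun B hB C hC => by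
    simpa only [onFun, disjoint_iff] using hφ B C hB hC
  rw [hA.isRankOneProjection_iff_isAtom_sqrtRange,
    (hφS.mapsTo hA).isRankOneProjection_iff_isAtom_sqrtRange,
    ← hA.maximal_relatedIn_iff_isAtom_sqrtRange,
    ← (hφS.mapsTo hA).maximal_relatedIn_iff_isAtom_sqrtRange,
    maximal_relatedIn_map_iff hφS.mapsTo hφS.surjOn hdisj hA]

theorem preserver_maps_pure_to_pure (hdim : 2 ≤ Module.rank ℂ H)
    (φ : (H →L[ℂ] H) → (H →L[ℂ] H))
    (hφS : Set.BijOn φ {A | IsState A} {A | IsState A})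
    (hφ : ∀ A B, IsState A → IsState B →
      (LinearMap.range (opSqrt A : H →ₗ[ℂ] H) ⊓ LinearMap.range (opSqrt B : H →ₗ[ℂ] H) = ⊥ ↔
        LinearMap.range (opSqrt (φ A) : H →ₗ[ℂ] H) ⊓ LinearMap.range (opSqrt (φ B) : H →ₗ[ℂ] H) = ⊥)) :
    ∀ A, IsState A → (IsRankOneProjection A ↔ IsRankOneProjection (φ A)) :=
  preserver_maps_pure_to_pure_general φ hφS hφ
end
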